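/- Let Λ ∈ [0,1) and let ν be a probability measure on X with ν(Γ₊ ∩ H) = 1. Then μ := (1−Λ)·Σ_{n≥0} Λⁿ·(T̂⁻ⁿ)_*ν, where (T̂⁻ⁿ)_*ν denotes the push-forward of ν under the n-th iterate of T̂⁻¹, is a probability measure on X and is an eigenmeasure of T with decay rate Λ, i.e. μ(T̂⁻¹(S) ∩ M) = Λ·μ(S) for every measurable S ⊆ X. -/

import Mathlib

/-!
Write `g = T̂⁻¹` and `μ = (1-Λ) ∑ Λⁿ g^[n]_* ν`. Since `ν` is carried by `Γ₊ ∩ H`, the term `n = 0`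
lives on `H` and each term with `n ≥ 1` lives on `M`. Hence restricting `μ` to `M` kills the first
term and leaves the others unchanged, and pushing forward by `T̂` turns `g^[n+1]_* ν` into
`g^[n]_* ν`; this reindexing costs one factor `Λ`, so `T̂_*(μ|_M) = Λ μ`, which evaluated on `S`
is the eigenmeasure equation.
-/

open MeasureTheory
open scoped ENNReal

namespace MeasureTheory.Measure

variable {α : Type*} [MeasurableSpace α]

theorem sum_pow_smul_eq_smul_sum_succ (ρ : ℕ → Measure α) (hρ : ρ 0 = 0) (Λ : ℝ≥0∞) :
    Measure.sum (fun n => Λ ^ n • ρ n) = Λ • Measure.sum (fun n => Λ ^ n • ρ (n + 1)) := by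
  ext s hs
  rw [smul_apply, sum_apply _ hs, sum_apply _ hs, tsum_eq_zero_add' ENNReal.summable]
  simp only [smul_apply, hρ, coe_zero, Pi.zero_apply, smul_zero, zero_add, smul_eq_mul,
    ← ENNReal.tsum_mul_left, pow_succ', mul_assoc]

noncomputable def geometricOrbitMeasure (ν : Measure α) (g : α → α) (Λ : ℝ≥0∞) : Measure α :=
  (1 - Λ) • Measure.sum (fun n : ℕ => Λ ^ n • ν.map g^[n])

theorem isProbabilityMeasure_geometricOrbitMeasure {ν : Measure α} [IsProbabilityMeasure ν]
    {g : α → α} (hg : Measurable g) {Λ : ℝ≥0∞} (hΛ : Λ < 1) :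
    IsProbabilityMeasure (geometricOrbitMeasure ν g Λ) := by
  constructor
  simp only [geometricOrbitMeasure, smul_apply, sum_apply _ MeasurableSet.univ,
    map_apply (hg.iterate _) MeasurableSet.univ, Set.preimage_univ, measure_univ, mul_one,
    smul_eq_mul, ENNReal.tsum_geometric]
  exact ENNReal.mul_inv_cancel (tsub_pos_of_lt hΛ).ne' (by finiteness)

theorem map_restrict_geometricOrbitMeasure {ν : Measure α} {f g : α → α} (hf : Measurable f)
    (hg : Measurable g) (hfg : Function.LeftInverse f g) {M : Set α} (hM : MeasurableSet M)
    (hν₀ : ν M = 0) (hν : ∀ n : ℕ, ∀ᵐ x ∂ν, g^[n + 1] x ∈ M) (Λ : ℝ≥0∞) :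
    ((geometricOrbitMeasure ν g Λ).restrict M).map f = Λ • geometricOrbitMeasure ν g Λ := by
  have hterm : ∀ n : ℕ, ((ν.map g^[n + 1]).restrict M).map f = ν.map g^[n] := by
    intro n
    rw [restrict_eq_self_of_ae_mem ((ae_map_iff (hg.iterate _).aemeasurable hM).mpr (hν n)),
      map_map hf (hg.iterate _), Function.iterate_succ', ← Function.comp_assoc,
      hfg.comp_eq_id, Function.id_comp]
  have hfirst : ((ν.map g^[0]).restrict M).map f = 0 := by
    rw [Function.iterate_zero, map_id, restrict_eq_zero.mpr hν₀, Measure.map_zero]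
  rw [geometricOrbitMeasure, restrict_smul, restrict_sum _ hM, Measure.map_smul,
    map_sum hf.aemeasurable]
  simp only [restrict_smul, Measure.map_smul]
  rw [sum_pow_smul_eq_smul_sum_succ _ hfirst]
  simp only [hterm, smul_comm Λ (1 - Λ)]

end MeasureTheory.Measure

open MeasureTheory.Measure

theorem Equiv.iterate_image_eq_preimage_symm_iterate {α : Type*} (e : α ≃ α) (n : ℕ)
    (s : Set α) : (⇑e)^[n] '' s = (⇑e.symm)^[n] ⁻¹' s :=
  congrFun (Set.image_eq_preimage_of_inverse (e.left_inv.iterate n) (e.right_inv.iterate n)) s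

theorem measure_compl_eq_zero_and_ae_iterate_symm_mem_compl {X : Type*}
    [MeasurableSpace X] {T : X ≃ X} (hT' : Measurable ⇑T.symm) {H : Set X}
    (hH : MeasurableSet H) {ν : Measure X} [IsProbabilityMeasure ν]
    (hν : ν ((⋂ j : ℕ, (⇑T)^[j + 1] '' Hᶜ) ∩ H) = 1) :
    ν Hᶜ = 0 ∧ ∀ n : ℕ, ∀ᵐ x ∂ν, (⇑T.symm)^[n + 1] x ∈ Hᶜ := by
  simp only [Equiv.iterate_image_eq_preimage_symm_iterate] at hν
  have hmeas : MeasurableSet ((⋂ j : ℕ, (⇑T.symm)^[j + 1] ⁻¹' Hᶜ) ∩ H) :=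
    (MeasurableSet.iInter fun j => hT'.iterate _ hH.compl).inter hH
  have hae : ∀ᵐ x ∂ν, x ∈ (⋂ j : ℕ, (⇑T.symm)^[j + 1] ⁻¹' Hᶜ) ∩ H :=
    (ae_mem_iff_measure_eq hmeas.nullMeasurableSet).mpr (by rw [hν, measure_univ])
  refine ⟨measure_eq_zero_iff_ae_notMem.mpr (hae.mono fun x hx hxH => hxH hx.2),
    fun n => hae.mono fun x hx => Set.mem_iInter.mp hx.1 n⟩

theorem eigenmeasure_construction
    {X : Type*} [MeasurableSpace X]
    (T : X ≃ X) (hT : Measurable ⇑T) (hT' : Measurable ⇑T.symm)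
    (H : Set X) (hH : MeasurableSet H)
    (Λ : ℝ≥0∞) (hΛ : Λ < 1)
    (ν : Measure X) [IsProbabilityMeasure ν]
    (hν : ν ((⋂ j : ℕ, (⇑T)^[j + 1] '' Hᶜ) ∩ H) = 1) :
    IsProbabilityMeasure
        ((1 - Λ) • Measure.sum (fun n : ℕ => Λ ^ n • ν.map ((⇑T.symm)^[n]))) ∧
    ∀ S : Set X, MeasurableSet S →
      ((1 - Λ) • Measure.sum (fun n : ℕ => Λ ^ n • ν.map ((⇑T.symm)^[n])))
          (⇑T ⁻¹' S ∩ Hᶜ)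
        = Λ * ((1 - Λ) • Measure.sum (fun n : ℕ => Λ ^ n • ν.map ((⇑T.symm)^[n]))) S := by
  obtain ⟨hν_M, hν_orbit⟩ := measure_compl_eq_zero_and_ae_iterate_symm_mem_compl hT' hH hν
  refine ⟨isProbabilityMeasure_geometricOrbitMeasure hT' hΛ, fun S hS => ?_⟩
  rw [← restrict_apply (hT hS), ← map_apply hT hS]
  exact congrArg (· S)
    (map_restrict_geometricOrbitMeasure hT hT' T.right_inv hH.compl hν_M hν_orbit Λ)
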